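/- arXiv:2106.01551 — 2 statements merged into one kernel-verified Lean document; each statement's English description precedes it below -/
import Mathlib

section
/- In student-proposing deferred acceptance, if a student i falsifies its preference list only by permuting or demoting colleges that rejected i in the original run (i.e., colleges ranked above i's assigned partner Ω(i)), while keeping Ω(i) in place, then rerunning the algorithm gives every student a partner at least as good as before: Ω_S(m) ⪰_m Ω(m) for all students m. -/
/-- Student i strictly prefers outcome o to outcome o' (any college is preferred to
being unmatched). -/
def SPrefOpt {D P : Type*} (sPref : D → P → P → Prop) (i : D) :
    Option P → Option P → Prop
  | some j, some j' => sPref i j j'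
  | some _, none => True
  | none, _ => False

/-- A matching is stable (no blocking student–college pair) for quotas and strict
preferences. -/
def StableMatching {D P : Type*} [Fintype D] [DecidableEq P]
    (quota : P → ℕ) (sPref : D → P → P → Prop) (cPref : P → D → D → Prop)
    (μ : D → Option P) : Prop :=
  (∀ j, (Finset.univ.filter fun i => μ i = some j).card ≤ quota j) ∧
  ¬ ∃ i j, (μ i = none ∨ ∃ j', μ i = some j' ∧ sPref i j j') ∧
      ((Finset.univ.filter fun i' => μ i' = some j).card < quota j ∨
        ∃ i', μ i' = some j ∧ cPref j i i')

/-- The student-optimal stable matching: stable, and every student weakly prefers it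
to any other stable matching.  This characterizes the outcome of student-proposing
deferred acceptance. -/
def StudentOptimal {D P : Type*} [Fintype D] [DecidableEq P]
    (quota : P → ℕ) (sPref : D → P → P → Prop) (cPref : P → D → D → Prop)
    (μ : D → Option P) : Prop :=
  StableMatching quota sPref cPref μ ∧
  ∀ μ', StableMatching quota sPref cPref μ' →
    ∀ i, μ i = μ' i ∨ SPrefOpt sPref i (μ i) (μ' i)

/-- Lemma 1 of the paper: in student-proposing deferred acceptance, if the students
falsify their lists only by permuting or demoting colleges ranked above their assigned
partner Ω(i) (all of which rejected them), keeping Ω(i) in place (i.e. every college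
ranked below Ω(i) in the true list stays below Ω(i) in the falsified list, unmatched
students keeping their true lists), then rerunning the algorithm gives every student a
partner at least as good as before: Ω_S(m) ⪰_m Ω(m) for all students m (w.r.t. the
true preferences). -/
theorem stmt12 {D P : Type*} [Fintype D] [DecidableEq D] [DecidableEq P]
    (quota : P → ℕ) (hquota : ∀ j, 1 ≤ quota j)
    (sPref sPref' : D → P → P → Prop) (cPref : P → D → D → Prop)
    (hsTotal : ∀ i a b, a ≠ b → sPref i a b ∨ sPref i b a)
    (hsAsym : ∀ i a b, sPref i a b → ¬ sPref i b a)
    (hsTrans : ∀ i a b c, sPref i a b → sPref i b c → sPref i a c)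
    (hs'Total : ∀ i a b, a ≠ b → sPref' i a b ∨ sPref' i b a)
    (hs'Asym : ∀ i a b, sPref' i a b → ¬ sPref' i b a)
    (hs'Trans : ∀ i a b c, sPref' i a b → sPref' i b c → sPref' i a c)
    (hcTotal : ∀ j a b, a ≠ b → cPref j a b ∨ cPref j b a)
    (hcAsym : ∀ j a b, cPref j a b → ¬ cPref j b a)
    (hcTrans : ∀ j a b c, cPref j a b → cPref j b c → cPref j a c)
    (Ω ΩS : D → Option P)
    (hΩ : StudentOptimal quota sPref cPref Ω)
    (hΩS : StudentOptimal quota sPref' cPref ΩS)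
    -- falsification condition: only colleges above Ω(i) are permuted or demoted,
    -- Ω(i) keeps its place: whatever is ranked above Ω(i) afterwards was above before
    (hfalsify : ∀ i oi, Ω i = some oi → ∀ j, sPref' i j oi → sPref i j oi)
    (hkeep : ∀ i oi, Ω i = some oi → ∀ j, sPref i oi j → sPref' i oi j)
    (hunmatched : ∀ i, Ω i = none → ∀ a b, sPref' i a b ↔ sPref i a b) :
    ∀ m, ΩS m = Ω m ∨ SPrefOpt sPref m (ΩS m) (Ω m) := by
  have hstable' : StableMatching quota sPref' cPref Ω := by
    obtain ⟨⟨hcap, hnb⟩, _⟩ := hΩ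
    refine ⟨hcap, ?_⟩
    rintro ⟨i, j, hpref, hroom⟩
    apply hnb
    refine ⟨i, j, ?_, hroom⟩
    rcases hpref with h | ⟨j', hj', hp⟩
    · exact Or.inl h
    · exact Or.inr ⟨j', hj', hfalsify i j' hj' j hp⟩
  intro m
  rcases hΩS.2 Ω hstable' m with h | h
  · exact Or.inl h
  · right
    cases hS : ΩS m with
    | none => rw [hS] at h; cases Ω m <;> exact h.elim
    | some j =>
      cases hO : Ω m with
      | none => trivial
      | some oi =>
        rw [hS, hO] at h
        exact hfalsify m oi hO j h
end

section
/- In student-proposing deferred acceptance, if the colleges truncated or reordered in a student's falsified list are only colleges to which the student never proposes in the new run, the resulting matching is identical to the original matching. -/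
/-- Case 1 of Lemma 1: if a student's falsified list reorders only colleges to which
the student never proposes in the new run — i.e. only colleges in a modified set
`Mod i`, every element of which is ranked (in both the true and falsified lists)
below the college Ω(i) that accepts the student, the lists agreeing outside `Mod i` —
then the matching produced by student-proposing deferred acceptance is unchanged. -/
theorem stmt13 {D P : Type*} [Fintype D] [DecidableEq D] [DecidableEq P]
    (quota : P → ℕ) (hquota : ∀ j, 1 ≤ quota j)
    (sPref sPref' : D → P → P → Prop) (cPref : P → D → D → Prop)
    (hsTotal : ∀ i a b, a ≠ b → sPref i a b ∨ sPref i b a)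
    (hsAsym : ∀ i a b, sPref i a b → ¬ sPref i b a)
    (hsTrans : ∀ i a b c, sPref i a b → sPref i b c → sPref i a c)
    (hs'Total : ∀ i a b, a ≠ b → sPref' i a b ∨ sPref' i b a)
    (hs'Asym : ∀ i a b, sPref' i a b → ¬ sPref' i b a)
    (hs'Trans : ∀ i a b c, sPref' i a b → sPref' i b c → sPref' i a c)
    (hcTotal : ∀ j a b, a ≠ b → cPref j a b ∨ cPref j b a)
    (hcAsym : ∀ j a b, cPref j a b → ¬ cPref j b a)
    (hcTrans : ∀ j a b c, cPref j a b → cPref j b c → cPref j a c)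
    (Ω ΩS : D → Option P)
    (hΩ : StudentOptimal quota sPref cPref Ω)
    (hΩS : StudentOptimal quota sPref' cPref ΩS)
    (Mod : D → Set P)
    (hagree : ∀ i a b, a ∉ Mod i → b ∉ Mod i → (sPref' i a b ↔ sPref i a b))
    (hbelow : ∀ i, (Mod i).Nonempty →
        ∃ oi, Ω i = some oi ∧ ∀ j ∈ Mod i, sPref i oi j ∧ sPref' i oi j) :
    ΩS = Ω := by
  -- Ω is stable under the falsified preferences sPref'
  have hΩstable' : StableMatching quota sPref' cPref Ω := by
    obtain ⟨hcard, hblock⟩ := hΩ.1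
    refine ⟨hcard, ?_⟩
    rintro ⟨i, j, hi, hcol⟩
    apply hblock
    refine ⟨i, j, ?_, hcol⟩
    rcases hi with hnone | ⟨j', hj', hpref⟩
    · exact Or.inl hnone
    · refine Or.inr ⟨j', hj', ?_⟩
      by_cases hjM : j ∈ Mod i
      · exfalso
        obtain ⟨oi, hoi, hlt⟩ := hbelow i ⟨j, hjM⟩
        rw [hj'] at hoi
        injection hoi with h; subst h
        exact hs'Asym i j' j (hlt j hjM).2 hpref
      · by_cases hj'M : j' ∈ Mod i
        · exfalso
          obtain ⟨oi, hoi, hlt⟩ := hbelow i ⟨j', hj'M⟩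
          rw [hj'] at hoi
          injection hoi with h; subst h
          exact hsAsym i j' j' (hlt j' hj'M).1 (hlt j' hj'M).1
        · exact (hagree i j j' hjM hj'M).mp hpref
  -- ΩS is stable under the true preferences sPref
  have hΩSstable : StableMatching quota sPref cPref ΩS := by
    obtain ⟨hcard, hblock⟩ := hΩS.1
    refine ⟨hcard, ?_⟩
    rintro ⟨i, j, hi, hcol⟩
    apply hblock
    refine ⟨i, j, ?_, hcol⟩
    rcases hi with hnone | ⟨j', hj', hpref⟩
    · exact Or.inl hnone
    · refine Or.inr ⟨j', hj', ?_⟩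
      by_cases hM : (Mod i).Nonempty
      · obtain ⟨oi, hoi, hlt⟩ := hbelow i hM
        have hoiM : oi ∉ Mod i := fun h => hsAsym i oi oi (hlt oi h).1 (hlt oi h).1
        have hopt := hΩS.2 Ω hΩstable' i
        have hj'M : j' ∉ Mod i := by
          intro h
          rcases hopt with heq | hp
          · rw [hj', hoi] at heq
            injection heq with he
            exact hoiM (he ▸ h)
          · rw [hj', hoi] at hp
            exact hs'Asym i oi j' (hlt j' h).2 hp
        by_cases hjM : j ∈ Mod i
        · exfalso
          rcases hopt with heq | hp
          · rw [hj', hoi] at heq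
            injection heq with he
            subst he
            exact hsAsym i j' j (hlt j hjM).1 hpref
          · rw [hj', hoi] at hp
            have h1 : sPref i j' oi := (hagree i j' oi hj'M hoiM).mp hp
            exact hsAsym i oi j (hlt j hjM).1 (hsTrans i j j' oi hpref h1)
        · exact (hagree i j j' hjM hj'M).mpr hpref
      · exact (hagree i j j' (fun h => hM ⟨j, h⟩) (fun h => hM ⟨j', h⟩)).mpr hpref
  -- Conclude pointwise equality from mutual optimality
  funext i
  have h1 := hΩ.2 ΩS hΩSstable i
  have h2 := hΩS.2 Ω hΩstable' i
  rcases h2 with h2 | h2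
  · exact h2
  rcases h1 with h1 | h1
  · exact h1.symm
  exfalso
  cases hA : Ω i with
  | none => rw [hA] at h1; exact h1
  | some a =>
    cases hB : ΩS i with
    | none => rw [hB] at h2; exact h2
    | some b =>
      rw [hA, hB] at h1 h2
      change sPref i a b at h1
      change sPref' i b a at h2
      by_cases hbM : b ∈ Mod i
      · obtain ⟨oi, hoi, hlt⟩ := hbelow i ⟨b, hbM⟩
        rw [hA] at hoi
        injection hoi with he; subst he
        exact hs'Asym i a b (hlt b hbM).2 h2
      · by_cases haM : a ∈ Mod i
        · obtain ⟨oi, hoi, hlt⟩ := hbelow i ⟨a, haM⟩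
          rw [hA] at hoi
          injection hoi with he; subst he
          exact hsAsym i a a (hlt a haM).1 (hlt a haM).1
        · exact hsAsym i a b h1 ((hagree i b a hbM haM).mp h2)
end
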